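/- arXiv:1803.05064 — 2 statements merged into one kernel-verified Lean document; each statement's English description precedes it below -/
import Mathlib

section
/- Let G be a group with hyper-FC center H. The quotient map G → G/H is a universal ICC quotient: G/H is ICC, and every surjective homomorphism from G onto an ICC group factors uniquely through G/H. -/
universe u

/-- The conjugacy class of `g` in `G`. -/
def conjClassSet {G : Type u} [Group G] (g : G) : Set G := {h | ∃ x : G, x * g * x⁻¹ = h}

/-- An FC-element is one with a finite conjugacy class. -/
def IsFCElement {G : Type u} [Group G] (g : G) : Prop := (conjClassSet g).Finite

/-- A group is ICC if every nonidentity element has an infinite conjugacy class. -/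
def IsICC (G : Type u) [Group G] : Prop := ∀ g : G, g ≠ 1 → (conjClassSet g).Infinite

/-- The FC-center of a group: the subgroup of elements with finite conjugacy class. -/
def FCCenter (G : Type u) [Group G] : Subgroup G where
  carrier := {g | IsFCElement g}
  one_mem' := Set.Finite.subset (Set.finite_singleton 1) (by rintro h ⟨x, rfl⟩; simp)
  mul_mem' := by
    intro a b ha hb
    refine ((Set.Finite.image (fun p : G × G => p.1 * p.2) (ha.prod hb)).subset ?_)
    rintro h ⟨x, rfl⟩
    exact ⟨(x * a * x⁻¹, x * b * x⁻¹), ⟨⟨x, rfl⟩, ⟨x, rfl⟩⟩, by group⟩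
  inv_mem' := by
    intro a ha
    refine (ha.image Inv.inv).subset ?_
    rintro h ⟨x, rfl⟩
    exact ⟨x * a * x⁻¹, ⟨x, rfl⟩, by group⟩

instance FCCenter_normal (G : Type u) [Group G] : (FCCenter G).Normal := by
  constructor
  intro n hn g
  refine Set.Finite.subset hn ?_
  rintro h ⟨x, rfl⟩
  exact ⟨x * g, by group⟩

/-- One step of the upper FC-series: the preimage of the FC-center of the quotient. -/
noncomputable def fcStep {G : Type u} [Group G] (F : Subgroup G) : Subgroup G :=
  (FCCenter (G ⧸ Subgroup.normalClosure (F : Set G))).comap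
    (QuotientGroup.mk' (Subgroup.normalClosure (F : Set G)))

instance fcStep_normal {G : Type u} [Group G] (F : Subgroup G) : (fcStep F).Normal :=
  Subgroup.Normal.comap inferInstance _

/-- The (transfinite) upper FC-series of `G`. -/
noncomputable def FCSeries (G : Type u) [Group G] (o : Ordinal.{u}) : Subgroup G :=
  Ordinal.limitRecOn o ⊥ (fun _ F => fcStep F)
    (fun o _ ih => ⨆ a : {a : Ordinal.{u} // a < o}, ih a a.2)

lemma FCSeries_zero (G : Type u) [Group G] : FCSeries G 0 = ⊥ :=
  Ordinal.limitRecOn_zero ..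

lemma FCSeries_succ (G : Type u) [Group G] (o : Ordinal.{u}) :
    FCSeries G (o + 1) = fcStep (FCSeries G o) :=
  Ordinal.limitRecOn_succ ..

lemma FCSeries_limit (G : Type u) [Group G] (o : Ordinal.{u}) (h : Order.IsSuccLimit o) :
    FCSeries G o = ⨆ a : {a : Ordinal.{u} // a < o}, FCSeries G a :=
  Ordinal.limitRecOn_limit _ _ _ _ h

lemma normal_iSup {G : Type u} [Group G] {ι : Sort*} (f : ι → Subgroup G)
    (h : ∀ i, (f i).Normal) : (⨆ i, f i).Normal := by
  constructor
  intro n hn g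
  have key : Subgroup.map (MulAut.conj g).toMonoidHom (⨆ i, f i) = ⨆ i, f i := by
    rw [Subgroup.map_iSup]
    refine iSup_congr fun i => ?_
    ext x
    constructor
    · rintro ⟨y, hy, rfl⟩
      exact (h i).conj_mem y hy g
    · intro hx
      exact ⟨g⁻¹ * x * g, by simpa using (h i).conj_mem x hx g⁻¹, by simp [MulAut.conj]; group⟩
  rw [← key]
  exact ⟨n, hn, rfl⟩

instance FCSeries_normal (G : Type u) [Group G] (o : Ordinal.{u}) : (FCSeries G o).Normal := by
  induction o using Ordinal.limitRecOn with
  | zero => rw [FCSeries_zero]; infer_instance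
  | add_one o ih => rw [FCSeries_succ]; infer_instance
  | limit o ho ih => rw [FCSeries_limit G o ho]; exact normal_iSup _ fun a => ih a a.2

/-- The hyper-FC center of `G`: the stabilized term of the upper FC-series. -/
noncomputable def hyperFCCenter (G : Type u) [Group G] : Subgroup G :=
  ⨆ o : Ordinal.{u}, FCSeries G o

instance hyperFCCenter_normal (G : Type u) [Group G] : (hyperFCCenter G).Normal :=
  normal_iSup _ fun _ => inferInstance

/-- The finitely-indexed upper FC-series. -/
noncomputable def natFCSeries (G : Type u) [Group G] : ℕ → Subgroup G
  | 0 => ⊥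
  | n + 1 => fcStep (natFCSeries G n)

/-!
A surjection `φ : G → J` maps conjugacy classes onto conjugacy classes, so when `J` is ICC every
FC-element of `G` lies in `ker φ`. Applied to the induced maps `G ⧸ F_α → J`, this shows by
transfinite induction that every term `F_α` of the upper FC-series, hence the hyper-FC center `H`,
lies in `ker φ`, which gives the factorization. On the other hand the series is monotone and each
element of `H` enters it at some stage, so it reaches `H` at an ordinal `κ`; then the preimage of
the FC-center of `G ⧸ H` is `F_{κ+1} ≤ H`, so `G ⧸ H` is ICC.
-/

section FCCenter

variable {G J : Type*} [Group G] [Group J]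

@[simp]
lemma mem_FCCenter {g : G} : g ∈ FCCenter G ↔ IsFCElement g := Iff.rfl

lemma isICC_iff_FCCenter_eq_bot : IsICC G ↔ FCCenter G = ⊥ := by
  simp only [IsICC, Subgroup.eq_bot_iff_forall, mem_FCCenter, IsFCElement, Set.Infinite]
  exact forall_congr' fun _ => not_imp_not

lemma conjClassSet_map_of_surjective {φ : G →* J} (hφ : Function.Surjective φ) (g : G) :
    conjClassSet (φ g) = φ '' conjClassSet g := by
  ext h
  constructor
  · rintro ⟨y, rfl⟩
    obtain ⟨x, rfl⟩ := hφ y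
    exact ⟨x * g * x⁻¹, ⟨x, rfl⟩, by simp⟩
  · rintro ⟨_, ⟨x, rfl⟩, rfl⟩
    exact ⟨φ x, by simp⟩

lemma IsFCElement.map_of_surjective {φ : G →* J} (hφ : Function.Surjective φ) {g : G}
    (hg : IsFCElement g) : IsFCElement (φ g) := by
  rw [IsFCElement, conjClassSet_map_of_surjective hφ]
  exact hg.image φ

lemma FCCenter_le_ker_of_surjective {φ : G →* J} (hφ : Function.Surjective φ)
    (hJ : IsICC J) : FCCenter G ≤ φ.ker := fun _ hg => by
  rw [MonoidHom.mem_ker, ← Subgroup.mem_bot, ← isICC_iff_FCCenter_eq_bot.mp hJ]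
  exact hg.map_of_surjective hφ

end FCCenter

section FCSeries

variable {G : Type u} [Group G]

lemma le_fcStep (F : Subgroup G) : F ≤ fcStep F := fun g hg => by
  have : (g : G ⧸ Subgroup.normalClosure (F : Set G)) = 1 :=
    (QuotientGroup.eq_one_iff g).mpr (Subgroup.subset_normalClosure hg)
  rw [fcStep, Subgroup.mem_comap, QuotientGroup.mk'_apply, this]
  exact one_mem _

lemma fcStep_eq_comap_of_normal (N : Subgroup G) [N.Normal] :
    fcStep N = (FCCenter (G ⧸ N)).comap (QuotientGroup.mk' N) := by
  -- `normalClosure N = N` cannot be rewritten inside `G ⧸ normalClosure N`, whose group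
  -- structure depends on it, so generalize the subgroup first.
  suffices ∀ (M : Subgroup G) [M.Normal], M = N →
      (FCCenter (G ⧸ M)).comap (QuotientGroup.mk' M) =
        (FCCenter (G ⧸ N)).comap (QuotientGroup.mk' N) from
    this _ (Subgroup.normalClosure_eq_self N)
  rintro M _ rfl
  rfl

lemma FCCenter_quotient_eq_bot_of_fcStep_le {N : Subgroup G} [N.Normal] (h : fcStep N ≤ N) :
    FCCenter (G ⧸ N) = ⊥ := by
  rw [Subgroup.eq_bot_iff_forall]
  intro x hx
  obtain ⟨g, rfl⟩ := QuotientGroup.mk_surjective x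
  rw [fcStep_eq_comap_of_normal] at h
  exact (QuotientGroup.eq_one_iff g).mpr (h hx)

lemma FCSeries_mono : Monotone (FCSeries G) := by
  intro a b hab
  induction b using Ordinal.limitRecOn with
  | zero => rw [nonpos_iff_eq_zero.mp hab]
  | add_one o ih =>
    rcases hab.eq_or_lt with rfl | h
    · rfl
    · exact (ih (Order.lt_add_one_iff.mp h)).trans (FCSeries_succ G o ▸ le_fcStep _)
  | limit o ho ih =>
    rcases hab.eq_or_lt with rfl | h
    · rfl
    · exact FCSeries_limit G o ho ▸
        le_iSup_of_le (f := fun x : {x // x < o} => FCSeries G x) ⟨a, h⟩ le_rfl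

lemma exists_FCSeries_eq_hyperFCCenter : ∃ κ : Ordinal.{u}, FCSeries G κ = hyperFCCenter G := by
  choose stage hstage using fun g : hyperFCCenter G =>
    (Subgroup.mem_iSup_of_directed FCSeries_mono.directed_le).mp g.2
  -- The stages are indexed by a `Type u`, so their supremum exists in `Ordinal.{u}`.
  refine ⟨⨆ g, stage g, le_antisymm (le_iSup (FCSeries G) _) fun g hg => ?_⟩
  exact FCSeries_mono (Ordinal.le_iSup stage ⟨g, hg⟩) (hstage ⟨g, hg⟩)

lemma fcStep_hyperFCCenter_le : fcStep (hyperFCCenter G) ≤ hyperFCCenter G := by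
  obtain ⟨κ, hκ⟩ := exists_FCSeries_eq_hyperFCCenter (G := G)
  calc fcStep (hyperFCCenter G) = FCSeries G (κ + 1) := by rw [FCSeries_succ, hκ]
    _ ≤ hyperFCCenter G := le_iSup (FCSeries G) _

variable {J : Type*} [Group J] {φ : G →* J}

lemma fcStep_le_ker_of_surjective (hφ : Function.Surjective φ) (hJ : IsICC J) {F : Subgroup G}
    (hF : F ≤ φ.ker) : fcStep F ≤ φ.ker := by
  have hN : Subgroup.normalClosure (F : Set G) ≤ φ.ker := Subgroup.normalClosure_le_normal hF
  have hφ' := QuotientGroup.lift_surjective_of_surjective _ φ hφ hN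
  intro g hg
  simpa using FCCenter_le_ker_of_surjective hφ' hJ hg

lemma FCSeries_le_ker_of_surjective (hφ : Function.Surjective φ) (hJ : IsICC J)
    (o : Ordinal.{u}) : FCSeries G o ≤ φ.ker := by
  induction o using Ordinal.limitRecOn with
  | zero => simp [FCSeries_zero]
  | add_one o ih => exact FCSeries_succ G o ▸ fcStep_le_ker_of_surjective hφ hJ ih
  | limit o ho ih => exact FCSeries_limit G o ho ▸ iSup_le fun a => ih a a.2

lemma hyperFCCenter_le_ker_of_surjective (hφ : Function.Surjective φ) (hJ : IsICC J) :
    hyperFCCenter G ≤ φ.ker :=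
  iSup_le (FCSeries_le_ker_of_surjective hφ hJ)

end FCSeries

/-- The quotient map G → G/hyperFCCenter G is the universal ICC quotient: the quotient is
ICC, and every surjection of G onto an ICC group factors uniquely through it. -/
theorem quotient_hyperFCCenter_universal_icc (G : Type u) [Group G] :
    IsICC (G ⧸ hyperFCCenter G) ∧
      ∀ (J : Type u) [Group J] (τ : G →* J), Function.Surjective τ → IsICC J →
        ∃! ρ : (G ⧸ hyperFCCenter G) →* J,
          ρ.comp (QuotientGroup.mk' (hyperFCCenter G)) = τ := by
  refine ⟨isICC_iff_FCCenter_eq_bot.mpr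
    (FCCenter_quotient_eq_bot_of_fcStep_le fcStep_hyperFCCenter_le), fun J _ τ hτ hJ => ?_⟩
  have hker := hyperFCCenter_le_ker_of_surjective hτ hJ
  refine ⟨QuotientGroup.lift _ τ hker, QuotientGroup.lift_comp_mk' _ τ hker, fun ρ hρ => ?_⟩
  exact QuotientGroup.monoidHom_ext _ (hρ.trans (QuotientGroup.lift_comp_mk' _ τ hker).symm)
end

section
/- If G is a finitely generated group whose FC-center equals G (every element has finite conjugacy class), then G is virtually abelian. -/
/-!
The centralizer of `g` has index equal to the size of the conjugacy class of `g`, so in an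
FC-group every centralizer has finite index. If `S` is a finite generating set, the center is
the intersection of the finitely many centralizers of elements of `S`, hence has finite index;
it is the abelian subgroup we want.
-/

universe u

section

variable {G : Type u} [Group G]

theorem orbit_conjAct_eq_conjClassSet (g : G) :
    MulAction.orbit (ConjAct G) g = conjClassSet g := by
  ext h
  constructor
  · rintro ⟨x, rfl⟩
    exact ⟨ConjAct.ofConjAct x, by simp [ConjAct.smul_def]⟩
  · rintro ⟨x, rfl⟩
    exact ⟨ConjAct.toConjAct x, by simp [ConjAct.smul_def]⟩

theorem index_centralizer_singleton (g : G) :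
    (Subgroup.centralizer {g}).index = (conjClassSet g).ncard := by
  rw [Subgroup.centralizer_eq_comap_stabilizer, ← orbit_conjAct_eq_conjClassSet,
    ← MulAction.index_stabilizer]
  exact Subgroup.index_comap_of_surjective (f := (ConjAct.toConjAct : G ≃* ConjAct G).toMonoidHom)
    (H := MulAction.stabilizer (ConjAct G) g) ConjAct.toConjAct.surjective

theorem finiteIndex_centralizer_singleton {g : G} (hg : (conjClassSet g).Finite) :
    (Subgroup.centralizer {g}).FiniteIndex := by
  have hne : (conjClassSet g).Nonempty := ⟨g, 1, by group⟩
  rw [Subgroup.finiteIndex_iff, index_centralizer_singleton]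
  exact ((Set.ncard_pos hg).mpr hne).ne'

theorem finiteIndex_center_of_fg (hfg : Group.FG G)
    (h : ∀ g : G, (Subgroup.centralizer {g}).FiniteIndex) :
    (Subgroup.center G).FiniteIndex := by
  obtain ⟨S, hS⟩ := Group.fg_def.mp hfg
  rw [Subgroup.center_eq_infi' hS]
  exact Subgroup.finiteIndex_iInf fun g => h g

end

/-- A finitely generated FC-group is virtually abelian. -/
theorem fg_fc_group_virtually_abelian (G : Type u) [Group G] (hfg : Group.FG G)
    (h : ∀ g : G, (conjClassSet g).Finite) :
    ∃ A : Subgroup G, A.FiniteIndex ∧ ∀ a ∈ A, ∀ b ∈ A, a * b = b * a :=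
  ⟨Subgroup.center G,
    finiteIndex_center_of_fg hfg fun g => finiteIndex_centralizer_singleton (h g),
    fun a _ _ hb => Subgroup.mem_center_iff.mp hb a⟩
end
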